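/- arXiv:2506.22253 — 8 statements merged into one kernel-verified Lean document; each statement's English description precedes it below -/
import Mathlib

section
/- Assume the confidence event holds. If arm i is Pareto optimal but not empirically Pareto optimal (i.e., i ∈ D⁺ and i ∉ D̂⁺), then V_i ≥ Δ_i. -/
open scoped Classical

/-- Arm `j` strictly dominates arm `i`: higher mean and lower risk. -/
def Dominates {K : ℕ} (μ ξ : Fin K → ℝ) (j i : Fin K) : Prop :=
  μ i < μ j ∧ ξ j < ξ i

/-- Arm `i` is Pareto optimal: no arm strictly dominates it. -/
def IsPareto {K : ℕ} (μ ξ : Fin K → ℝ) (i : Fin K) : Prop :=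
  ∀ j, ¬ Dominates μ ξ j i

/-- m(i,j) := min(μ_j − μ_i, ξ_i − ξ_j). -/
def mSmall {K : ℕ} (μ ξ : Fin K → ℝ) (i j : Fin K) : ℝ :=
  min (μ j - μ i) (ξ i - ξ j)

/-- M(i,j) := max(μ_i − μ_j, ξ_j − ξ_i). -/
def MBig {K : ℕ} (μ ξ : Fin K → ℝ) (i j : Fin K) : ℝ :=
  max (μ i - μ j) (ξ j - ξ i)

/-- The gap of a non-Pareto arm: Δ_i = max{ m(i,j) : j ∈ D⁺, j ≻ i }. -/
noncomputable def gapSub {K : ℕ} (μ ξ : Fin K → ℝ) (i : Fin K) : ℝ :=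
  sSup {x : ℝ | ∃ j, IsPareto μ ξ j ∧ Dominates μ ξ j i ∧ x = mSmall μ ξ i j}

/-- The gap Δ_i of an arm, valued in the extended reals so that a minimum
over an empty index set equals +∞. -/
noncomputable def gap {K : ℕ} (μ ξ : Fin K → ℝ) (i : Fin K) : EReal :=
  if IsPareto μ ξ i then
    min
      (sInf {x : EReal | ∃ j, j ≠ i ∧ IsPareto μ ξ j ∧
        x = ((min (MBig μ ξ i j) (MBig μ ξ j i) : ℝ) : EReal)})
      (sInf {x : EReal | ∃ j, ¬ IsPareto μ ξ j ∧
        x = ((max (MBig μ ξ j i) 0 + gapSub μ ξ j : ℝ) : EReal)})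
  else ((gapSub μ ξ i : ℝ) : EReal)

/-- The quantity V_i, computed from empirical means `μh`, empirical risks `ξh`
and confidence radii `β`.  The empirical Pareto set / dominance are `IsPareto μh ξh`
and `Dominates μh ξh`. -/
noncomputable def Vq {K : ℕ} (μh ξh β : Fin K → ℝ) (i : Fin K) : ℝ :=
  if IsPareto μh ξh i then
    sSup {x : ℝ | ∃ j, j ≠ i ∧
      x = min ((μh j + β j) - (μh i - β i)) ((ξh i + β i) - (ξh j - β j))}
  else
    sInf {x : ℝ | ∃ j, IsPareto μh ξh j ∧ Dominates μh ξh j i ∧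
      x = max ((μh i + β i) - (μh j - β j)) ((ξh j + β j) - (ξh i - β i))}

/-- V := max_i V_i. -/
noncomputable def Vmax {K : ℕ} (μh ξh β : Fin K → ℝ) : ℝ :=
  sSup {x : ℝ | ∃ i, x = Vq μh ξh β i}

/-- The confidence event: every empirical mean and empirical risk is within its
confidence radius of the true value. -/
def ConfEvent {K : ℕ} (μ ξ μh ξh β : Fin K → ℝ) : Prop :=
  ∀ i, |μh i - μ i| < β i ∧ |ξh i - ξ i| < β i

/-- The arm simple regret r_i(S): equals Δ_i on the symmetric difference S △ D⁺,
and 0 otherwise. -/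
noncomputable def armRegret {K : ℕ} (μ ξ : Fin K → ℝ) (S : Set (Fin K)) (i : Fin K) : EReal :=
  if (i ∈ S ↔ IsPareto μ ξ i) then 0 else gap μ ξ i

/-- The simple regret r_S := max_i r_i(S). -/
noncomputable def setRegret {K : ℕ} (μ ξ : Fin K → ℝ) (S : Set (Fin K)) : EReal :=
  sSup {x : EReal | ∃ i, x = armRegret μ ξ S i}

lemma key_arith (mi ri mj rj mk rk x : ℝ)
    (hx0 : 0 < x) (hxa : mi - mj < x) (hxb : rj - ri < x)
    (hkj1 : mj < mk) (hkj2 : rk < rj)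
    (hki : mk ≤ mi ∨ ri ≤ rk) :
    max (max (mj - mi) (ri - rj)) 0 + min (mk - mj) (rj - rk) ≤ x ∨
      ((mk ≠ mi ∨ rk ≠ ri) ∧ max (mi - mk) (rk - ri) ≤ x) := by
  have hm1 : min (mk - mj) (rj - rk) ≤ mk - mj := min_le_left _ _
  have hm2 : min (mk - mj) (rj - rk) ≤ rj - rk := min_le_right _ _
  rcases hki with h | h
  · rcases le_or_gt (ri - rj) (max (mj - mi) 0) with hc | hc
    · left
      rw [← max_add_add_right, ← max_add_add_right]
      refine max_le (max_le ?_ ?_) ?_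
      · linarith
      · rcases le_or_gt (ri - rj) (mj - mi) with h' | h'
        · linarith
        · have : ri - rj ≤ 0 := by
            rcases le_or_gt (mj - mi) 0 with h'' | h''
            · simpa [max_eq_right h''] using hc
            · linarith [le_max_left (mj - mi) (0:ℝ)]
          linarith
      · linarith
    · right
      have hrj : rj < ri := by
        have := le_max_right (mj - mi) (0:ℝ)
        linarith
      refine ⟨Or.inr (by intro hrr; linarith [hrr ▸ hkj2]), max_le ?_ ?_⟩
      · linarith
      · linarith
  · rcases le_or_gt (mj - mi) (max (ri - rj) 0) with hc | hc
    · left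
      rw [← max_add_add_right, ← max_add_add_right]
      refine max_le (max_le ?_ ?_) ?_
      · rcases le_or_gt (mj - mi) (ri - rj) with h' | h'
        · linarith
        · have : mj - mi ≤ 0 := by
            rcases le_or_gt (ri - rj) 0 with h'' | h''
            · simpa [max_eq_right h''] using hc
            · linarith [le_max_left (ri - rj) (0:ℝ)]
          linarith
      · linarith
      · linarith
    · right
      have hmj : mi < mj := by
        have := le_max_right (ri - rj) (0:ℝ)
        linarith
      refine ⟨Or.inl (by intro hmm; linarith [hmm ▸ hkj1]), max_le ?_ ?_⟩
      · linarith
      · linarith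

lemma exists_pareto_dominator {K : ℕ} (μ ξ : Fin K → ℝ) (i : Fin K)
    (h : ¬ IsPareto μ ξ i) : ∃ j, IsPareto μ ξ j ∧ Dominates μ ξ j i := by
  classical
  simp only [IsPareto, not_forall, not_not] at h
  obtain ⟨j0, hj0⟩ := h
  have hs : (Finset.univ.filter (fun j => Dominates μ ξ j i)).Nonempty :=
    ⟨j0, by simp [hj0]⟩
  obtain ⟨j, hjmem, hjmax⟩ := Finset.exists_max_image _ μ hs
  rw [Finset.mem_filter] at hjmem
  refine ⟨j, ?_, hjmem.2⟩
  intro l hl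
  have hli : Dominates μ ξ l i := ⟨lt_trans hjmem.2.1 hl.1, lt_trans hl.2 hjmem.2.2⟩
  have := hjmax l (by simp [hli])
  exact absurd hl.1 (not_lt.mpr this)

/-- On the confidence event, if arm i is Pareto optimal but not
empirically Pareto optimal, then V_i ≥ Δ_i. -/
theorem stmt1 (K : ℕ) (hK : 2 ≤ K) (μ ξ μh ξh β : Fin K → ℝ)
    (hβ : ∀ i, 0 < β i) (hE : ConfEvent μ ξ μh ξh β)
    (i : Fin K) (hi : IsPareto μ ξ i) (hi' : ¬ IsPareto μh ξh i) :
    gap μ ξ i ≤ ((Vq μh ξh β i : ℝ) : EReal) := by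
  classical
  have hμ1 : ∀ a, μ a - β a < μh a := fun a => by
    have := (abs_lt.mp (hE a).1).1; linarith
  have hμ2 : ∀ a, μh a < μ a + β a := fun a => by
    have := (abs_lt.mp (hE a).1).2; linarith
  have hξ1 : ∀ a, ξ a - β a < ξh a := fun a => by
    have := (abs_lt.mp (hE a).2).1; linarith
  have hξ2 : ∀ a, ξh a < ξ a + β a := fun a => by
    have := (abs_lt.mp (hE a).2).2; linarith
  rw [Vq, if_neg hi']
  set S : Set ℝ := {x : ℝ | ∃ j, IsPareto μh ξh j ∧ Dominates μh ξh j i ∧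
      x = max ((μh i + β i) - (μh j - β j)) ((ξh j + β j) - (ξh i - β i))} with hSdef
  obtain ⟨j0, hj0P, hj0D⟩ := exists_pareto_dominator μh ξh i hi'
  have hne : S.Nonempty := ⟨_, j0, hj0P, hj0D, rfl⟩
  have hub : ∀ x ∈ S, gap μ ξ i ≤ (x : EReal) := by
    rintro x ⟨j, hjP, hjD, rfl⟩
    set x := max ((μh i + β i) - (μh j - β j)) ((ξh j + β j) - (ξh i - β i)) with hxdef
    have hxa : μ i - μ j < x := by
      have h1 := hμ1 i; have h2 := hμ2 j
      have h3 := le_max_left ((μh i + β i) - (μh j - β j)) ((ξh j + β j) - (ξh i - β i))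
      rw [← hxdef] at h3
      linarith
    have hxb : ξ j - ξ i < x := by
      have h1 := hξ1 j; have h2 := hξ2 i
      have h3 := le_max_right ((μh i + β i) - (μh j - β j)) ((ξh j + β j) - (ξh i - β i))
      rw [← hxdef] at h3
      linarith
    have hx0 : 0 < x := by
      rcases not_and_or.mp (hi j) with h | h
      · push_neg at h; linarith
      · push_neg at h; linarith
    rw [gap, if_pos hi]
    by_cases hjTP : IsPareto μ ξ j
    · have hji : j ≠ i := by
        intro h; rw [h] at hjD; exact lt_irrefl _ hjD.1
      refine le_trans (min_le_left _ _) (le_trans (sInf_le ⟨j, hji, hjTP, rfl⟩) ?_)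
      rw [EReal.coe_le_coe_iff]
      refine le_trans (min_le_left _ _) ?_
      exact max_le hxa.le hxb.le
    · by_cases hall : ∀ k, IsPareto μ ξ k → Dominates μ ξ k j →
          max (MBig μ ξ j i) 0 + mSmall μ ξ j k ≤ x
      · refine le_trans (min_le_right _ _) (le_trans (sInf_le ⟨j, hjTP, rfl⟩) ?_)
        rw [EReal.coe_le_coe_iff]
        have hne2 : {y : ℝ | ∃ k, IsPareto μ ξ k ∧ Dominates μ ξ k j ∧
            y = mSmall μ ξ j k}.Nonempty := by
          obtain ⟨k, hk1, hk2⟩ := exists_pareto_dominator μ ξ j hjTP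
          exact ⟨_, k, hk1, hk2, rfl⟩
        have hsub : gapSub μ ξ j ≤ x - max (MBig μ ξ j i) 0 := by
          refine csSup_le hne2 ?_
          rintro y ⟨k, hk1, hk2, rfl⟩
          have := hall k hk1 hk2
          linarith
        linarith
      · push_neg at hall
        obtain ⟨k, hkP, hkD, hk⟩ := hall
        have hki' : μ k ≤ μ i ∨ ξ i ≤ ξ k := by
          rcases not_and_or.mp (hi k) with h | h
          · push_neg at h; exact Or.inl h
          · push_neg at h; exact Or.inr h
        have hkey := key_arith (μ i) (ξ i) (μ j) (ξ j) (μ k) (ξ k) x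
          hx0 hxa hxb hkD.1 hkD.2 hki'
        rcases hkey with h | ⟨hne3, hmax⟩
        · simp only [MBig, mSmall] at hk
          exact absurd h (not_le.mpr hk)
        · have hki2 : k ≠ i := by
            rintro rfl; rcases hne3 with h | h <;> exact h rfl
          refine le_trans (min_le_left _ _) (le_trans (sInf_le ⟨k, hki2, hkP, rfl⟩) ?_)
          rw [EReal.coe_le_coe_iff]
          exact le_trans (min_le_left _ _) hmax
  obtain ⟨x0, hx0S⟩ := hne
  have key2 : ∀ G : EReal, (∀ x ∈ S, G ≤ (x : EReal)) → G ≤ ((sInf S : ℝ) : EReal) := by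
    intro G hG
    induction G using EReal.rec with
    | bot => exact bot_le
    | coe g =>
        have : g ≤ sInf S := le_csInf ⟨x0, hx0S⟩
          (fun y hy => EReal.coe_le_coe_iff.mp (hG y hy))
        exact_mod_cast this
    | top => exact absurd (hG x0 hx0S) (EReal.coe_lt_top x0).not_ge
  exact key2 _ hub
end

section
/- Assume the confidence event holds. If arm i is empirically Pareto optimal but not Pareto optimal (i.e., i ∈ D̂⁺ and i ∉ D⁺), then V_i ≥ Δ_i. -/
open scoped Classical

/-- On the confidence event, if arm i is empirically Pareto optimal
but not Pareto optimal, then V_i ≥ Δ_i (here Δ_i = gapSub i since i ∉ D⁺). -/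
theorem stmt2 (K : ℕ) (hK : 2 ≤ K) (μ ξ μh ξh β : Fin K → ℝ)
    (hβ : ∀ i, 0 < β i) (hE : ConfEvent μ ξ μh ξh β)
    (i : Fin K) (hi : IsPareto μh ξh i) (hi' : ¬ IsPareto μ ξ i) :
    gapSub μ ξ i ≤ Vq μh ξh β i := by
  classical
  -- there exists a Pareto arm dominating i
  obtain ⟨j, hjD, hjP⟩ : ∃ j, Dominates μ ξ j i ∧ IsPareto μ ξ j := by
    simp only [IsPareto, not_forall, not_not] at hi'
    obtain ⟨j0, hj0⟩ := hi'
    have hS : (Finset.univ.filter (fun j => Dominates μ ξ j i)).Nonempty :=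
      ⟨j0, by simp [hj0]⟩
    obtain ⟨j, hjmem, hjmax⟩ := Finset.exists_max_image _ (fun j => μ j - ξ j) hS
    simp only [Finset.mem_filter] at hjmem
    refine ⟨j, hjmem.2, fun k hk => ?_⟩
    have hki : Dominates μ ξ k i :=
      ⟨lt_trans hjmem.2.1 hk.1, lt_trans hk.2 hjmem.2.2⟩
    have := hjmax k (by simp [hki])
    have : μ j - ξ j < μ k - ξ k := by
      have := hk.1; have := hk.2; unfold Dominates at hk; linarith [hk.1, hk.2]
    linarith [hjmax k (by simp [hki])]
  set g : Fin K → ℝ := fun j =>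
    min ((μh j + β j) - (μh i - β i)) ((ξh i + β i) - (ξh j - β j)) with hg
  have hbdd : BddAbove {x : ℝ | ∃ j, j ≠ i ∧ x = g j} := by
    apply Set.Finite.bddAbove
    apply (Set.finite_range g).subset
    rintro x ⟨j, _, rfl⟩; exact ⟨j, rfl⟩
  rw [Vq, if_pos hi]
  have key : ∀ k, Dominates μ ξ k i → mSmall μ ξ i k ≤ g k := by
    intro k hk
    obtain ⟨hμk, hξk⟩ := hE k
    obtain ⟨hμi, hξi⟩ := hE i
    rw [abs_lt] at hμk hξk hμi hξi
    unfold mSmall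
    apply min_le_min <;> linarith
  refine csSup_le ⟨mSmall μ ξ i j, j, hjP, hjD, rfl⟩ ?_
  rintro x ⟨k, hkP, hkD, rfl⟩
  have hki : k ≠ i := by
    intro h; rw [h] at hkD; exact absurd hkD.1 (lt_irrefl _)
  exact le_trans (key k hkD) (le_csSup hbdd ⟨k, hki, rfl⟩)
end

section
/- Let m be an arm maximizing V_i and let p be the associated comparison arm. If i ∈ {m, p} is the arm with the larger confidence radius, i.e., β_i = max(β_m, β_p), then V ≤ 2β_i. -/
open scoped Classical

/-- If m maximizes V_i, p is the associated comparison arm, and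
i ∈ {m, p} has the larger confidence radius β_i = max(β_m, β_p), then V ≤ 2β_i. -/
theorem stmt3 (K : ℕ) (hK : 2 ≤ K) (μh ξh β : Fin K → ℝ) (hβ : ∀ i, 0 < β i)
    (m p : Fin K)
    (hm : ∀ j, Vq μh ξh β j ≤ Vq μh ξh β m)
    (hp1 : IsPareto μh ξh m → p ≠ m ∧
      Vq μh ξh β m = min ((μh p + β p) - (μh m - β m)) ((ξh m + β m) - (ξh p - β p)))
    (hp2 : ¬ IsPareto μh ξh m → (IsPareto μh ξh p ∧ Dominates μh ξh p m) ∧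
      Vq μh ξh β m = max ((μh m + β m) - (μh p - β p)) ((ξh p + β p) - (ξh m - β m)))
    (i : Fin K) (hi : i = m ∨ i = p) (hβi : β i = max (β m) (β p)) :
    Vmax μh ξh β ≤ 2 * β i := by
  have hβi2 : (0:ℝ) ≤ 2 * β i := by have := hβ i; linarith
  have hmax : β m + β p ≤ 2 * β i := by
    rw [hβi]
    rcases le_total (β m) (β p) with h | h
    · rw [max_eq_right h]; linarith
    · rw [max_eq_left h]; linarith
  have hVm : Vq μh ξh β m ≤ 2 * β i := by
    by_cases hP : IsPareto μh ξh m
    · obtain ⟨hne, heq⟩ := hp1 hP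
      have hnd := hP p
      rw [Dominates] at hnd
      push_neg at hnd
      rw [heq]
      rcases lt_or_ge (μh m) (μh p) with h1 | h1
      · have h2 := hnd h1
        calc min ((μh p + β p) - (μh m - β m)) ((ξh m + β m) - (ξh p - β p))
            ≤ (ξh m + β m) - (ξh p - β p) := min_le_right _ _
          _ ≤ 2 * β i := by linarith
      · calc min ((μh p + β p) - (μh m - β m)) ((ξh m + β m) - (ξh p - β p))
            ≤ (μh p + β p) - (μh m - β m) := min_le_left _ _
          _ ≤ 2 * β i := by linarith
    · obtain ⟨⟨hPp, h1, h2⟩, heq⟩ := hp2 hP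
      rw [heq]
      apply max_le <;> linarith
  rw [Vmax]
  apply Real.sSup_le _ hβi2
  rintro x ⟨j, rfl⟩
  exact (hm j).trans hVm
end

section
/- Assume the confidence event holds. Let m be an arm maximizing V_i and p the associated comparison arm, and let i ∈ {m, p} satisfy β_i = max(β_m, β_p). Then V ≤ min(0, −r_i(D̂⁺) + 2β_i) + 2β_i. -/
open scoped Classical

lemma subset_range_finite {K : ℕ} (S : Set ℝ) (f : Fin K → ℝ)
    (h : ∀ x ∈ S, ∃ j, x = f j) : S.Finite :=
  Set.Finite.subset (Set.finite_range f)
    (fun x hx => by obtain ⟨j, rfl⟩ := h x hx; exact Set.mem_range_self j)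

lemma key_lemma {K : ℕ} (μ ξ μh ξh β : Fin K → ℝ) (hE : ConfEvent μ ξ μh ξh β)
    (i : Fin K) (hmis : ¬ (IsPareto μh ξh i ↔ IsPareto μ ξ i)) :
    gap μ ξ i ≤ ((Vq μh ξh β i : ℝ) : EReal) := by
  have hconf : ∀ k, μ k < μh k + β k ∧ μh k - β k < μ k ∧
      ξ k < ξh k + β k ∧ ξh k - β k < ξ k := by
    intro k
    obtain ⟨h1, h2⟩ := hE k
    rw [abs_lt] at h1 h2
    exact ⟨by linarith [h1.1, h1.2], by linarith [h1.1, h1.2],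
      by linarith [h2.1, h2.2], by linarith [h2.1, h2.2]⟩
  by_cases hP : IsPareto μ ξ i
  · -- i is truly Pareto, not empirically Pareto
    have hPhat : ¬ IsPareto μh ξh i := fun h => hmis ⟨fun _ => hP, fun _ => h⟩
    rw [gap, if_pos hP, Vq, if_neg hPhat]
    set C := {x : ℝ | ∃ j, IsPareto μh ξh j ∧ Dominates μh ξh j i ∧
      x = max ((μh i + β i) - (μh j - β j)) ((ξh j + β j) - (ξh i - β i))} with hC
    have hCne : C.Nonempty := by
      obtain ⟨j, hjP, hjD⟩ := exists_pareto_dominator μh ξh i hPhat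
      exact ⟨_, j, hjP, hjD, rfl⟩
    have hCfin : C.Finite := subset_range_finite C
      (fun j => max ((μh i + β i) - (μh j - β j)) ((ξh j + β j) - (ξh i - β i)))
      (by rintro x ⟨j, _, _, rfl⟩; exact ⟨j, rfl⟩)
    obtain ⟨j, hjP, hjD, hcEq⟩ := hCne.csInf_mem hCfin
    rw [hcEq]
    set R := max ((μh i + β i) - (μh j - β j)) ((ξh j + β j) - (ξh i - β i)) with hR
    have hji : j ≠ i := by
      rintro rfl
      exact absurd hjD.1 (lt_irrefl _)
    by_cases hPj : IsPareto μ ξ j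
    · refine le_trans (min_le_left _ _) (le_trans (sInf_le ⟨j, hji, hPj, rfl⟩) ?_)
      rw [EReal.coe_le_coe_iff]
      refine le_trans (min_le_left _ _) ?_
      refine max_le ?_ ?_
      · exact le_trans (by linarith [(hconf i).1, (hconf j).2.1]) (le_max_left _ _)
      · exact le_trans (by linarith [(hconf i).2.2.2, (hconf j).2.2.1]) (le_max_right _ _)
    · obtain ⟨l, hlP, hlD⟩ := exists_pareto_dominator μ ξ j hPj
      by_cases hli : l = i
      · subst hli
        -- l truly dominates j; use the B-part of the min
        refine le_trans (min_le_right _ _) (le_trans (sInf_le ⟨j, hPj, rfl⟩) ?_)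
        rw [EReal.coe_le_coe_iff]
        have hM0 : max (MBig μ ξ j l) 0 = 0 := by
          apply max_eq_right
          exact max_le (by linarith [hlD.1]) (by linarith [hlD.2])
        rw [hM0, zero_add]
        refine csSup_le ⟨_, l, hlP, hlD, rfl⟩ ?_
        rintro x ⟨l', hl'P, hl'D, rfl⟩
        rcases not_and_or.mp (hP l') with h | h
        · push_neg at h
          exact le_trans (min_le_left _ _)
            (le_trans (by linarith [(hconf l).1, (hconf j).2.1, hl'D.1]) (le_max_left _ _))
        · push_neg at h
          exact le_trans (min_le_right _ _)
            (le_trans (by linarith [(hconf l).2.2.2, (hconf j).2.2.1, hl'D.2]) (le_max_right _ _))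
      · refine le_trans (min_le_left _ _) (le_trans (sInf_le ⟨l, hli, hlP, rfl⟩) ?_)
        rw [EReal.coe_le_coe_iff]
        refine le_trans (min_le_left _ _) (max_le ?_ ?_)
        · exact le_trans (by linarith [(hconf i).1, (hconf j).2.1, hlD.1]) (le_max_left _ _)
        · exact le_trans (by linarith [(hconf i).2.2.2, (hconf j).2.2.1, hlD.2]) (le_max_right _ _)
  · -- i is not truly Pareto, hence empirically Pareto
    have hPhat : IsPareto μh ξh i := by
      by_contra h
      exact hmis ⟨fun hh => absurd hh h, fun hh => absurd hh hP⟩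
    rw [gap, if_neg hP, Vq, if_pos hPhat, EReal.coe_le_coe_iff]
    set S' := {x : ℝ | ∃ j, j ≠ i ∧
      x = min ((μh j + β j) - (μh i - β i)) ((ξh i + β i) - (ξh j - β j))} with hS'
    have hS'bdd : BddAbove S' := (subset_range_finite S'
      (fun j => min ((μh j + β j) - (μh i - β i)) ((ξh i + β i) - (ξh j - β j)))
      (by rintro x ⟨j, _, rfl⟩; exact ⟨j, rfl⟩)).bddAbove
    obtain ⟨j0, hj0P, hj0D⟩ := exists_pareto_dominator μ ξ i hP
    refine csSup_le ⟨_, j0, hj0P, hj0D, rfl⟩ ?_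
    rintro x ⟨j, hjP, hjD, rfl⟩
    have hji : j ≠ i := by
      rintro rfl
      exact absurd hjD.1 (lt_irrefl _)
    refine le_trans ?_ (le_csSup hS'bdd ⟨j, hji, rfl⟩)
    refine le_min ?_ ?_
    · exact le_trans (min_le_left _ _) (by linarith [(hconf i).2.1, (hconf j).1])
    · exact le_trans (min_le_right _ _) (by linarith [(hconf i).2.2.1, (hconf j).2.2.2])

/-- On the confidence event, with m maximizing V_i, p the associated
comparison arm, and i ∈ {m, p} with β_i = max(β_m, β_p),
V ≤ min(0, −r_i(D̂⁺) + 2β_i) + 2β_i. -/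
theorem stmt4 (K : ℕ) (hK : 2 ≤ K) (μ ξ μh ξh β : Fin K → ℝ) (hβ : ∀ i, 0 < β i)
    (hE : ConfEvent μ ξ μh ξh β)
    (m p : Fin K)
    (hm : ∀ j, Vq μh ξh β j ≤ Vq μh ξh β m)
    (hp1 : IsPareto μh ξh m → p ≠ m ∧
      Vq μh ξh β m = min ((μh p + β p) - (μh m - β m)) ((ξh m + β m) - (ξh p - β p)))
    (hp2 : ¬ IsPareto μh ξh m → (IsPareto μh ξh p ∧ Dominates μh ξh p m) ∧
      Vq μh ξh β m = max ((μh m + β m) - (μh p - β p)) ((ξh p + β p) - (ξh m - β m)))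
    (i : Fin K) (hi : i = m ∨ i = p) (hβi : β i = max (β m) (β p)) :
    ((Vmax μh ξh β : ℝ) : EReal) ≤
      min 0 (-(armRegret μ ξ {k | IsPareto μh ξh k} i) + ((2 * β i : ℝ) : EReal))
        + ((2 * β i : ℝ) : EReal) := by
  have hconf := hE
  -- Vmax ≤ Vq m
  have hVm : Vmax μh ξh β ≤ Vq μh ξh β m := by
    refine csSup_le ⟨_, m, rfl⟩ ?_
    rintro x ⟨j, rfl⟩
    exact hm j
  -- Vq m ≤ β m + β p
  have hVb : Vq μh ξh β m ≤ β m + β p := by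
    by_cases hPm : IsPareto μh ξh m
    · obtain ⟨hpm, heq⟩ := hp1 hPm
      rw [heq]
      rcases not_and_or.mp (hPm p) with h | h
      · push_neg at h
        exact le_trans (min_le_left _ _) (by linarith)
      · push_neg at h
        exact le_trans (min_le_right _ _) (by linarith)
    · obtain ⟨⟨hpP, hpD⟩, heq⟩ := hp2 hPm
      rw [heq]
      exact max_le (by linarith [hpD.1]) (by linarith [hpD.2])
  have hβmp : β m + β p ≤ 2 * β i := by
    rw [hβi]
    have h1 := le_max_left (β m) (β p)
    have h2 := le_max_right (β m) (β p)
    linarith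
  have h2b : Vq μh ξh β m ≤ 2 * β i := hVb.trans hβmp
  have hV2 : Vmax μh ξh β ≤ 2 * β i := hVm.trans h2b
  have hc0 : (0:ℝ) ≤ 2 * β i := by linarith [hβ i]
  by_cases hcl : (i ∈ {k | IsPareto μh ξh k} ↔ IsPareto μ ξ i)
  · rw [armRegret, if_pos hcl, neg_zero, zero_add,
      min_eq_left (by exact_mod_cast hc0 : (0:EReal) ≤ ((2 * β i : ℝ) : EReal)), zero_add]
    exact_mod_cast hV2
  · rw [armRegret, if_neg hcl]
    have hg : gap μ ξ i ≤ ((Vq μh ξh β i : ℝ) : EReal) := key_lemma μ ξ μh ξh β hE i hcl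
    have hg' : gap μ ξ i ≤ ((Vq μh ξh β m : ℝ) : EReal) :=
      hg.trans (EReal.coe_le_coe_iff.mpr (hm i))
    rcases eq_or_ne (gap μ ξ i) ⊥ with hb | hb
    · rw [hb]
      have : -(⊥ : EReal) + ((2 * β i : ℝ) : EReal) = ⊤ := by
        rw [EReal.neg_bot]
        exact EReal.top_add_coe _
      rw [this, min_eq_left le_top, zero_add]
      exact_mod_cast hV2
    · have ht : gap μ ξ i ≠ ⊤ :=
        ne_top_of_le_ne_top (EReal.coe_ne_top _) hg'
      obtain ⟨g, hgeq⟩ : ∃ g : ℝ, gap μ ξ i = (g : EReal) :=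
        ⟨(gap μ ξ i).toReal, (EReal.coe_toReal ht hb).symm⟩
      rw [hgeq] at hg' ⊢
      rw [EReal.coe_le_coe_iff] at hg'
      have hfin : Vmax μh ξh β ≤ min 0 (-g + 2 * β i) + 2 * β i := by
        have hmin : Vmax μh ξh β - 2 * β i ≤ min 0 (-g + 2 * β i) :=
          le_min (by linarith) (by linarith)
        linarith
      calc ((Vmax μh ξh β : ℝ) : EReal)
          ≤ ((min 0 (-g + 2 * β i) + 2 * β i : ℝ) : EReal) := EReal.coe_le_coe_iff.mpr hfin
        _ = min 0 (-((g:ℝ):EReal) + ((2 * β i : ℝ) : EReal)) + ((2 * β i : ℝ) : EReal) := by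
            have hmc : ((min 0 (-g + 2 * β i) : ℝ) : EReal)
                = min (((0:ℝ):EReal)) ((-g + 2 * β i : ℝ) : EReal) := by
              rcases le_total (0:ℝ) (-g + 2 * β i) with h | h
              · rw [min_eq_left h, min_eq_left (EReal.coe_le_coe_iff.mpr h)]
              · rw [min_eq_right h, min_eq_right (EReal.coe_le_coe_iff.mpr h)]
            rw [EReal.coe_add, hmc, EReal.coe_add, EReal.coe_neg, EReal.coe_zero]
end

section
/- Let ε > 0 and assume the confidence event holds. If V < ε, then D̂⁺ is an ε-Pareto set in the following sense: (1) for every i ∈ D̂⁺ and every arm j ≠ i, it is not the case that both μ_i ≤ μ_j − ε and ξ_i ≥ ξ_j + ε; and (2) for every i ∉ D̂⁺ there exists an arm j ≠ i with μ_i < μ_j + ε and ξ_i > ξ_j − ε. -/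
open scoped Classical

/-- On the confidence event, if V < ε then D̂⁺ is an ε-Pareto set. -/
theorem stmt5 (K : ℕ) (hK : 2 ≤ K) (ε : ℝ) (hε : 0 < ε)
    (μ ξ μh ξh β : Fin K → ℝ) (hβ : ∀ i, 0 < β i)
    (hE : ConfEvent μ ξ μh ξh β)
    (hV : Vmax μh ξh β < ε) :
    (∀ i, IsPareto μh ξh i → ∀ j, j ≠ i → ¬ (μ i ≤ μ j - ε ∧ ξ i ≥ ξ j + ε)) ∧
    (∀ i, ¬ IsPareto μh ξh i → ∃ j, j ≠ i ∧ μ i < μ j + ε ∧ ξ i > ξ j - ε) := by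

  have habs : ∀ i, μ i - β i < μh i ∧ μh i < μ i + β i ∧ ξ i - β i < ξh i ∧ ξh i < ξ i + β i := by
    intro i
    obtain ⟨h1, h2⟩ := hE i
    rw [abs_lt] at h1 h2
    exact ⟨by linarith [h1.1], by linarith [h1.2], by linarith [h2.1], by linarith [h2.2]⟩
  have hVi : ∀ i, Vq μh ξh β i < ε := by
    intro i
    rw [Vmax] at hV
    refine lt_of_le_of_lt (le_csSup ?_ (show Vq μh ξh β i ∈ {x : ℝ | ∃ k, x = Vq μh ξh β k} from ⟨i, rfl⟩)) hV
    refine BddAbove.mono ?_ (Set.finite_range (Vq μh ξh β)).bddAbove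
    rintro x ⟨k, rfl⟩; exact ⟨k, rfl⟩
  constructor
  · intro i hi j hji ⟨h1, h2⟩
    have hVq := hVi i
    rw [Vq, if_pos hi] at hVq
    have hmem : min ((μh j + β j) - (μh i - β i)) ((ξh i + β i) - (ξh j - β j)) ∈
        {x : ℝ | ∃ j, j ≠ i ∧
          x = min ((μh j + β j) - (μh i - β i)) ((ξh i + β i) - (ξh j - β j))} := ⟨j, hji, rfl⟩
    have hbdd : BddAbove {x : ℝ | ∃ j, j ≠ i ∧
        x = min ((μh j + β j) - (μh i - β i)) ((ξh i + β i) - (ξh j - β j))} := by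
      refine BddAbove.mono ?_ (Set.finite_range
        (fun j => min ((μh j + β j) - (μh i - β i)) ((ξh i + β i) - (ξh j - β j)))).bddAbove
      rintro x ⟨k, _, rfl⟩; exact ⟨k, rfl⟩
    have hlt := lt_of_le_of_lt (le_csSup hbdd hmem) hVq
    obtain ⟨hi1, hi2, hi3, hi4⟩ := habs i
    obtain ⟨hj1, hj2, hj3, hj4⟩ := habs j
    rcases min_lt_iff.mp hlt with h | h <;> linarith
  · intro i hi
    have hdom : ∃ j, IsPareto μh ξh j ∧ Dominates μh ξh j i := by
      simp only [IsPareto, not_forall, not_not] at hi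
      obtain ⟨j0, hj0⟩ := hi
      have hS : (Finset.univ.filter (fun j => Dominates μh ξh j i)).Nonempty :=
        ⟨j0, Finset.mem_filter.mpr ⟨Finset.mem_univ _, hj0⟩⟩
      obtain ⟨j, hjS, hjmax⟩ := Finset.exists_max_image _ μh hS
      have hjd := (Finset.mem_filter.mp hjS).2
      refine ⟨j, fun k hk => ?_, hjd⟩
      have hkd : Dominates μh ξh k i := ⟨lt_trans hjd.1 hk.1, lt_trans hk.2 hjd.2⟩
      have := hjmax k (Finset.mem_filter.mpr ⟨Finset.mem_univ _, hkd⟩)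
      exact absurd this (not_le.mpr hk.1)
    obtain ⟨j0, hj0p, hj0d⟩ := hdom
    have hVq := hVi i
    rw [Vq, if_neg hi] at hVq
    have hne : ({x : ℝ | ∃ j, IsPareto μh ξh j ∧ Dominates μh ξh j i ∧
        x = max ((μh i + β i) - (μh j - β j)) ((ξh j + β j) - (ξh i - β i))}).Nonempty :=
      ⟨_, j0, hj0p, hj0d, rfl⟩
    have hex : ∃ x ∈ {x : ℝ | ∃ j, IsPareto μh ξh j ∧ Dominates μh ξh j i ∧
        x = max ((μh i + β i) - (μh j - β j)) ((ξh j + β j) - (ξh i - β i))}, x < ε := by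
      by_contra hcon
      push_neg at hcon
      exact absurd (le_csInf hne hcon) (not_le.mpr hVq)
    obtain ⟨x, ⟨j, hjp, hjd, rfl⟩, hxlt⟩ := hex
    have h1 := lt_of_le_of_lt (le_max_left _ _) hxlt
    have h2 := lt_of_le_of_lt (le_max_right _ _) hxlt
    obtain ⟨hi1, hi2, hi3, hi4⟩ := habs i
    obtain ⟨hj1, hj2, hj3, hj4⟩ := habs j
    refine ⟨j, fun h => ?_, by linarith, by linarith⟩
    rw [h] at hjd; exact lt_irrefl _ hjd.1
end

section
/- Let ε > 0 and assume the confidence event holds. If arm i belongs to the empirical Pareto set D̂⁺ and V_i < ε, then for every arm j ≠ i, either μ_j − μ_i < ε or ξ_i − ξ_j < ε. -/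
open scoped Classical

/-- On the confidence event, if arm i is empirically Pareto optimal
and V_i < ε, then for every arm j ≠ i, μ_j − μ_i < ε or ξ_i − ξ_j < ε. -/
theorem stmt6 (K : ℕ) (hK : 2 ≤ K) (ε : ℝ) (hε : 0 < ε)
    (μ ξ μh ξh β : Fin K → ℝ) (hβ : ∀ i, 0 < β i)
    (hE : ConfEvent μ ξ μh ξh β)
    (i : Fin K) (hi : IsPareto μh ξh i) (hV : Vq μh ξh β i < ε) :
    ∀ j, j ≠ i → μ j - μ i < ε ∨ ξ i - ξ j < ε := by
  intro j hj
  set S : Set ℝ := {x : ℝ | ∃ j, j ≠ i ∧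
      x = min ((μh j + β j) - (μh i - β i)) ((ξh i + β i) - (ξh j - β j))} with hS
  have hfin : S.Finite := by
    have : S ⊆ (fun j => min ((μh j + β j) - (μh i - β i)) ((ξh i + β i) - (ξh j - β j))) ''
        (Set.univ : Set (Fin K)) := by
      rintro x ⟨k, _, rfl⟩; exact ⟨k, Set.mem_univ k, rfl⟩
    exact (Set.Finite.image _ (Set.finite_univ)).subset this
  have hmem : min ((μh j + β j) - (μh i - β i)) ((ξh i + β i) - (ξh j - β j)) ∈ S :=
    ⟨j, hj, rfl⟩
  have hle : min ((μh j + β j) - (μh i - β i)) ((ξh i + β i) - (ξh j - β j)) ≤ Vq μh ξh β i := by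
    rw [Vq, if_pos hi]
    exact le_csSup hfin.bddAbove hmem
  have hmin : min ((μh j + β j) - (μh i - β i)) ((ξh i + β i) - (ξh j - β j)) < ε :=
    lt_of_le_of_lt hle hV
  have h1 := (abs_lt.mp (hE j).1)
  have h2 := (abs_lt.mp (hE i).1)
  have h3 := (abs_lt.mp (hE i).2)
  have h4 := (abs_lt.mp (hE j).2)
  rcases min_lt_iff.mp hmin with h | h
  · left; nlinarith [h1.1, h1.2, h2.1, h2.2]
  · right; nlinarith [h3.1, h3.2, h4.1, h4.2]
end

section
/- Let ε > 0 and assume the confidence event holds. If arm i does not belong to the empirical Pareto set D̂⁺ and V_i < ε, then there exists an arm k ∈ D̂⁺ with k ≻̂ i such that μ_i − μ_k < ε and ξ_k − ξ_i < ε. -/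
open scoped Classical

/-- On the confidence event, if arm i is not empirically Pareto
optimal and V_i < ε, then some empirically Pareto-optimal arm k empirically
dominating i satisfies μ_i − μ_k < ε and ξ_k − ξ_i < ε. -/
theorem stmt7 (K : ℕ) (hK : 2 ≤ K) (ε : ℝ) (hε : 0 < ε)
    (μ ξ μh ξh β : Fin K → ℝ) (hβ : ∀ i, 0 < β i)
    (hE : ConfEvent μ ξ μh ξh β)
    (i : Fin K) (hi : ¬ IsPareto μh ξh i) (hV : Vq μh ξh β i < ε) :
    ∃ k, IsPareto μh ξh k ∧ Dominates μh ξh k i ∧ μ i - μ k < ε ∧ ξ k - ξ i < ε := by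
  -- Step 1: there is a Pareto arm dominating i.
  have hdom : ∃ j, IsPareto μh ξh j ∧ Dominates μh ξh j i := by
    simp only [IsPareto, not_forall, not_not] at hi
    obtain ⟨j0, hj0⟩ := hi
    -- consider the finset of dominators of i, pick one with maximal μh
    have hne : (Finset.univ.filter (fun j => Dominates μh ξh j i)).Nonempty :=
      ⟨j0, by simp [hj0]⟩
    obtain ⟨j, hjmem, hjmax⟩ :=
      (Finset.univ.filter (fun j => Dominates μh ξh j i)).exists_max_image μh hne
    simp only [Finset.mem_filter] at hjmem
    refine ⟨j, ?_, hjmem.2⟩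
    intro l hl
    have hld : Dominates μh ξh l i :=
      ⟨lt_trans hjmem.2.1 hl.1, lt_trans hl.2 hjmem.2.2⟩
    have := hjmax l (by simp [hld])
    exact absurd hl.1 (not_lt.mpr this)
  -- Step 2: Vq is the sInf over a nonempty bddBelow set; get witness < ε.
  set S : Set ℝ := {x : ℝ | ∃ j, IsPareto μh ξh j ∧ Dominates μh ξh j i ∧
      x = max ((μh i + β i) - (μh j - β j)) ((ξh j + β j) - (ξh i - β i))} with hS
  have hVeq : Vq μh ξh β i = sInf S := by
    simp [Vq, hi, hS]
  obtain ⟨j0, hj0P, hj0D⟩ := hdom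
  have hSne : S.Nonempty := ⟨_, j0, hj0P, hj0D, rfl⟩
  have hSbdd : BddBelow S := by
    have hfin : S.Finite := Set.Finite.subset (Set.finite_range
        (fun j : Fin K => max ((μh i + β i) - (μh j - β j)) ((ξh j + β j) - (ξh i - β i))))
        (by rintro x ⟨j, _, _, rfl⟩; exact ⟨j, rfl⟩)
    exact hfin.bddBelow
  have hex : ∃ x ∈ S, x < ε := by
    by_contra h
    push_neg at h
    have : ε ≤ sInf S := le_csInf hSne h
    rw [hVeq] at hV
    linarith
  obtain ⟨x, ⟨k, hkP, hkD, rfl⟩, hxε⟩ := hex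
  refine ⟨k, hkP, hkD, ?_, ?_⟩
  · have h1 : (μh i + β i) - (μh k - β k) < ε := lt_of_le_of_lt (le_max_left _ _) hxε
    have hi' := (abs_lt.mp (hE i).1)
    have hk' := (abs_lt.mp (hE k).1)
    linarith
  · have h2 : (ξh k + β k) - (ξh i - β i) < ε := lt_of_le_of_lt (le_max_right _ _) hxε
    have hi' := (abs_lt.mp (hE i).2)
    have hk' := (abs_lt.mp (hE k).2)
    linarith
end

section
/- Let K ≥ 1 be an integer and δ ∈ (0,1). For each i ∈ {1,…,K}, let X_i(1), X_i(2), … be an infinite sequence of independent, identically distributed random variables taking values in [0,1] with mean μ_i := E[X_i(1)]. For an integer s ≥ 2 define β_s := √((4/s)·ln(8K(log₂ s)²/δ)). Then the probability that there exist i ∈ {1,…,K} and an integer s ≥ 2 such that |(1/s)·Σ_{l=1}^{s} X_i(l) − μ_i| ≥ β_s is at most (δ/4)·(π²/6), which is strictly less than δ/2. -/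
open MeasureTheory ProbabilityTheory
open scoped ENNReal

section Helpers

variable {Ω : Type*} [MeasureSpace Ω] [IsProbabilityMeasure (ℙ : Measure Ω)]

lemma my_integrable_of_bdd {f : Ω → ℝ} (hm : AEStronglyMeasurable f ℙ) (C : ℝ)
    (h : ∀ ω, |f ω| ≤ C) : Integrable f ℙ :=
  Integrable.mono' (integrable_const C) hm (Filter.Eventually.of_forall fun ω => by
    simpa [Real.norm_eq_abs] using h ω)

lemma my_mgf_le {Y : Ω → ℝ} (hm : Measurable Y) (hb : ∀ ω, |Y ω| ≤ 1)
    (h0 : ∫ ω, Y ω ∂ℙ = 0) (t : ℝ) :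
    ∫ ω, Real.exp (t * Y ω) ∂ℙ ≤ Real.exp (t ^ 2 / 2) := by
  have hYint : Integrable Y ℙ := my_integrable_of_bdd hm.aestronglyMeasurable 1 hb
  have hptwise : ∀ ω, Real.exp (t * Y ω) ≤ Real.cosh t + Y ω * Real.sinh t := by
    intro ω
    have hy := abs_le.1 (hb ω)
    have h1 : (0:ℝ) ≤ (1 - Y ω)/2 := by linarith [hy.2]
    have h2 : (0:ℝ) ≤ (1 + Y ω)/2 := by linarith [hy.1]
    have hab : (1 - Y ω)/2 + (1 + Y ω)/2 = 1 := by ring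
    have hcv := convexOn_exp.2 (Set.mem_univ (-t)) (Set.mem_univ t) h1 h2 hab
    simp only [smul_eq_mul] at hcv
    have harg : (1 - Y ω)/2 * (-t) + (1 + Y ω)/2 * t = t * Y ω := by ring
    rw [harg] at hcv
    calc Real.exp (t * Y ω) ≤ (1 - Y ω)/2 * Real.exp (-t) + (1 + Y ω)/2 * Real.exp t := hcv
      _ = Real.cosh t + Y ω * Real.sinh t := by rw [Real.cosh_eq, Real.sinh_eq]; ring
  have hint1 : Integrable (fun ω => Real.exp (t * Y ω)) ℙ := by
    refine my_integrable_of_bdd ((hm.const_mul t).exp).aestronglyMeasurable (Real.exp |t|) ?_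
    intro ω
    rw [abs_of_pos (Real.exp_pos _)]
    apply Real.exp_le_exp.2
    calc t * Y ω ≤ |t * Y ω| := le_abs_self _
      _ = |t| * |Y ω| := abs_mul _ _
      _ ≤ |t| * 1 := mul_le_mul_of_nonneg_left (hb ω) (abs_nonneg t)
      _ = |t| := mul_one _
  have hint2 : Integrable (fun ω => Real.cosh t + Y ω * Real.sinh t) ℙ :=
    (integrable_const _).add (hYint.mul_const _)
  calc ∫ ω, Real.exp (t * Y ω) ∂ℙ
      ≤ ∫ ω, (Real.cosh t + Y ω * Real.sinh t) ∂ℙ :=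
        integral_mono hint1 hint2 hptwise
    _ = Real.cosh t + (∫ ω, Y ω ∂ℙ) * Real.sinh t := by
        rw [integral_add (integrable_const _) (hYint.mul_const _), integral_const,
          integral_mul_const]
        simp
    _ = Real.cosh t := by rw [h0]; ring
    _ ≤ Real.exp (t ^ 2 / 2) := Real.cosh_le_exp_half_sq t


lemma my_maximal {Y : ℕ → Ω → ℝ} (hm : ∀ l, Measurable (Y l))
    (hb : ∀ l ω, |Y l ω| ≤ 1) (h0 : ∀ l, ∫ ω, Y l ω ∂ℙ = 0)
    (hind : iIndepFun Y ℙ)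
    (n : ℕ) (hn : 1 ≤ n) {a : ℝ} (ha : 0 < a) :
    ℙ {ω | ∃ k, 1 ≤ k ∧ k ≤ n ∧ a ≤ ∑ l ∈ Finset.range k, Y l ω}
      ≤ ENNReal.ofReal (Real.exp (-(a ^ 2) / (2 * n))) := by
  have hn0 : (0:ℝ) < n := by exact_mod_cast hn
  set t : ℝ := a / n with ht_def
  have ht : 0 < t := div_pos ha hn0
  set S : ℕ → Ω → ℝ := fun k ω => ∑ l ∈ Finset.range k, Y l ω with hS_def
  have hSmeas : ∀ k, Measurable (S k) := fun k =>
    Finset.measurable_sum _ (fun l _ => hm l)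
  have hSbd : ∀ k ω, |S k ω| ≤ k := by
    intro k ω
    calc |S k ω| ≤ ∑ l ∈ Finset.range k, |Y l ω| := Finset.abs_sum_le_sum_abs _ _
      _ ≤ ∑ l ∈ Finset.range k, (1:ℝ) := Finset.sum_le_sum fun l _ => hb l ω
      _ = k := by simp
  -- integrability helper
  have hint : ∀ {h : Ω → ℝ}, Measurable h → ∀ (M : ℝ), (∀ ω, |h ω| ≤ M) →
      Integrable (fun ω => Real.exp (t * h ω)) ℙ := by
    intro h hh M hM
    refine my_integrable_of_bdd ((hh.const_mul t).exp).aestronglyMeasurable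
      (Real.exp (|t| * M)) ?_
    intro ω
    rw [abs_of_pos (Real.exp_pos _)]
    apply Real.exp_le_exp.2
    calc t * h ω ≤ |t * h ω| := le_abs_self _
      _ = |t| * |h ω| := abs_mul _ _
      _ ≤ |t| * M := mul_le_mul_of_nonneg_left (hM ω) (abs_nonneg t)
  have hYint : ∀ l, Integrable (Y l) ℙ := fun l =>
    my_integrable_of_bdd (hm l).aestronglyMeasurable 1 (hb l)
  have hSint : ∀ k, Integrable (S k) ℙ := fun k =>
    integrable_finset_sum _ (fun l _ => hYint l)
  have hS0 : ∀ k, ∫ ω, S k ω ∂ℙ = 0 := by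
    intro k
    rw [hS_def]
    rw [integral_finset_sum _ (fun l _ => hYint l)]
    simp [h0]
  set A : ℕ → Set Ω := fun k => {ω | a ≤ S k ω ∧ ∀ j < k, S j ω < a} with hA_def
  have hAeq : ∀ k, A k = {ω | a ≤ S k ω} ∩ ⋂ j, ⋂ (_ : j < k), {ω | S j ω < a} := by
    intro k; ext ω; simp [hA_def, Set.mem_iInter]
  have hAmeas : ∀ k, MeasurableSet (A k) := by
    intro k
    rw [hAeq k]
    exact (measurableSet_le measurable_const (hSmeas k)).inter
      (MeasurableSet.iInter fun j => MeasurableSet.iInter fun _ =>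
        measurableSet_lt (hSmeas j) measurable_const)
  -- inclusion into first-hitting decomposition
  have hsub : {ω | ∃ k, 1 ≤ k ∧ k ≤ n ∧ a ≤ S k ω} ⊆ ⋃ k ∈ Finset.Icc 1 n, A k := by
    rintro ω ⟨k, hk1, hkn, hka⟩
    have hex : ∃ m, a ≤ S m ω := ⟨k, hka⟩
    have hfind := Nat.find_spec hex
    have hfle : Nat.find hex ≤ k := Nat.find_min' hex hka
    have hf1 : 1 ≤ Nat.find hex := by
      rcases Nat.eq_zero_or_pos (Nat.find hex) with h | h
      · exfalso
        have : a ≤ S 0 ω := h ▸ hfind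
        simp [hS_def] at this
        linarith
      · exact h
    refine Set.mem_iUnion₂.2 ⟨Nat.find hex, Finset.mem_Icc.2 ⟨hf1, hfle.trans hkn⟩,
      hfind, fun j hj => lt_of_not_ge (Nat.find_min hex hj)⟩
  have hdisj2 : ∀ {k k' : ℕ}, k < k' → Disjoint (A k) (A k') := by
    intro k k' hkk'
    rw [Set.disjoint_left]
    rintro ω ⟨hk, _⟩ ⟨_, hall⟩
    exact absurd hk (not_le.2 (hall k hkk'))
  have hdisj : (↑(Finset.Icc 1 n) : Set ℕ).Pairwise (Function.onFun Disjoint A) := by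
    intro k _ k' _ hne
    rcases hne.lt_or_gt with h | h
    · exact hdisj2 h
    · exact (hdisj2 h).symm
  -- the key per-index inequality
  have hkey : ∀ k ∈ Finset.Icc 1 n,
      Real.exp (t * a) * (ℙ (A k)).toReal ≤ ∫ ω in A k, Real.exp (t * S n ω) ∂ℙ := by
    intro k hk
    rw [Finset.mem_Icc] at hk
    obtain ⟨hk1, hkn⟩ := hk
    set F : Ω → ℝ := (A k).indicator (fun ω => Real.exp (t * S k ω)) with hF_def
    set G : Ω → ℝ := fun ω => Real.exp (t * (S n ω - S k ω)) with hG_def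
    have hFmeas : Measurable F := (((hSmeas k).const_mul t).exp).indicator (hAmeas k)
    have hFbd : ∀ ω, |F ω| ≤ Real.exp (|t| * k) := by
      intro ω
      by_cases hω : ω ∈ A k
      · rw [hF_def]
        simp only [Set.indicator_of_mem hω]
        rw [abs_of_pos (Real.exp_pos _)]
        apply Real.exp_le_exp.2
        calc t * S k ω ≤ |t * S k ω| := le_abs_self _
          _ = |t| * |S k ω| := abs_mul _ _
          _ ≤ |t| * k := mul_le_mul_of_nonneg_left (hSbd k ω) (abs_nonneg t)
      · rw [hF_def]
        simp only [Set.indicator_of_notMem hω]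
        simp [Real.exp_pos, (Real.exp_pos _).le]
    have hFint : Integrable F ℙ :=
      my_integrable_of_bdd hFmeas.aestronglyMeasurable _ hFbd
    have hGint : Integrable G ℙ := by
      refine hint ((hSmeas n).sub (hSmeas k)) ((n:ℝ) + k) ?_
      intro ω
      calc |S n ω - S k ω| ≤ |S n ω| + |S k ω| := abs_sub _ _
        _ ≤ (n:ℝ) + k := add_le_add (hSbd n ω) (hSbd k ω)
    -- independence of F and G
    have hdisjRI : Disjoint (Finset.range k) (Finset.Ico k n) := by
      rw [Finset.disjoint_left]
      intro x hx hx'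
      rw [Finset.mem_range] at hx
      rw [Finset.mem_Ico] at hx'
      omega
    have base := hind.indepFun_finset (Finset.range k) (Finset.Ico k n) hdisjRI hm
    set T : ℕ → (↥(Finset.range k) → ℝ) → ℝ :=
      fun j v => ∑ l : ↥(Finset.range k), if (l : ℕ) < j then v l else 0 with hT_def
    have hTmeas : ∀ j, Measurable (T j) := by
      intro j
      apply Finset.measurable_sum
      intro l _
      by_cases hc : (l : ℕ) < j
      · simpa [hc] using measurable_pi_apply l
      · simpa [hc] using measurable_const
    have hT : ∀ j, j ≤ k → ∀ ω, T j (fun l => Y l ω) = S j ω := by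
      intro j hj ω
      simp only [hT_def, hS_def]
      rw [Finset.sum_coe_sort (Finset.range k) (fun l => if l < j then Y l ω else 0)]
      rw [← Finset.sum_subset (Finset.range_subset_range.2 hj) (fun x _ hx => by
        rw [Finset.mem_range] at hx; simp [hx])]
      apply Finset.sum_congr rfl
      intro l hl
      rw [Finset.mem_range] at hl
      simp [hl]
    set B : Set (↥(Finset.range k) → ℝ) :=
      {v | a ≤ T k v} ∩ ⋂ j, ⋂ (_ : j < k), {v | T j v < a} with hB_def
    have hBmeas : MeasurableSet B :=
      (measurableSet_le measurable_const (hTmeas k)).inter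
        (MeasurableSet.iInter fun j => MeasurableSet.iInter fun _ =>
          measurableSet_lt (hTmeas j) measurable_const)
    set φ : (↥(Finset.range k) → ℝ) → ℝ :=
      B.indicator (fun v => Real.exp (t * T k v)) with hφ_def
    have hφmeas : Measurable φ := (((hTmeas k).const_mul t).exp).indicator hBmeas
    set ψ : (↥(Finset.Ico k n) → ℝ) → ℝ :=
      fun v => Real.exp (t * ∑ l : ↥(Finset.Ico k n), v l) with hψ_def
    have hψmeas : Measurable ψ :=
      ((Finset.measurable_sum _ (fun l _ => measurable_pi_apply l)).const_mul t).exp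
    have hmemB : ∀ ω, ((fun l : ↥(Finset.range k) => Y l ω) ∈ B) ↔ ω ∈ A k := by
      intro ω
      rw [hB_def, hA_def]
      simp only [Set.mem_inter_iff, Set.mem_setOf_eq, Set.mem_iInter]
      constructor
      · rintro ⟨h1, h2⟩
        rw [hT k le_rfl ω] at h1
        exact ⟨h1, fun j hj => by have := h2 j hj; rwa [hT j hj.le ω] at this⟩
      · rintro ⟨h1, h2⟩
        refine ⟨by rwa [hT k le_rfl ω], fun j hj => by rw [hT j hj.le ω]; exact h2 j hj⟩
    have hFeq : F = φ ∘ (fun ω (l : ↥(Finset.range k)) => Y l ω) := by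
      funext ω
      by_cases hω : ω ∈ A k
      · have hv : (fun l : ↥(Finset.range k) => Y l ω) ∈ B := (hmemB ω).2 hω
        simp only [hF_def, hφ_def, Function.comp_apply, Set.indicator_of_mem hω,
          Set.indicator_of_mem hv]
        rw [hT k le_rfl ω]
      · have hv : (fun l : ↥(Finset.range k) => Y l ω) ∉ B :=
          fun h => hω ((hmemB ω).1 h)
        simp only [hF_def, hφ_def, Function.comp_apply, Set.indicator_of_notMem hω,
          Set.indicator_of_notMem hv]
    have hGeq : G = ψ ∘ (fun ω (l : ↥(Finset.Ico k n)) => Y l ω) := by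
      funext ω
      simp only [hG_def, hψ_def, Function.comp_apply]
      congr 1
      rw [Finset.sum_coe_sort (Finset.Ico k n) (fun l => Y l ω)]
      rw [Finset.sum_Ico_eq_sub _ hkn]
    have hFG : IndepFun F G ℙ := by
      rw [hFeq, hGeq]
      exact base.comp hφmeas hψmeas
    -- the integral computation
    have hindic : (A k).indicator (fun ω => Real.exp (t * S n ω)) = fun ω => F ω * G ω := by
      funext ω
      by_cases hω : ω ∈ A k
      · simp only [Set.indicator_of_mem hω, hF_def, hG_def, Set.indicator_of_mem hω]
        rw [← Real.exp_add]
        ring_nf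
      · simp [Set.indicator_of_notMem hω, hF_def, hG_def]
    have hsetint : ∫ ω in A k, Real.exp (t * S n ω) ∂ℙ = (∫ ω, F ω ∂ℙ) * ∫ ω, G ω ∂ℙ := by
      rw [← integral_indicator (hAmeas k), hindic]
      exact hFG.integral_fun_mul_eq_mul_integral hFint.aestronglyMeasurable hGint.aestronglyMeasurable
    have hG1 : 1 ≤ ∫ ω, G ω ∂ℙ := by
      have hmono : ∀ ω, t * (S n ω - S k ω) + 1 ≤ G ω := fun ω => Real.add_one_le_exp _
      have hint0 : Integrable (fun ω => t * (S n ω - S k ω)) ℙ := by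
        exact ((hSint n).sub (hSint k)).const_mul t
      have hint' : Integrable (fun ω => t * (S n ω - S k ω) + 1) ℙ :=
        hint0.add (integrable_const 1)
      calc (1:ℝ) = ∫ ω, (t * (S n ω - S k ω) + 1) ∂ℙ := by
            rw [integral_add hint0 (integrable_const 1),
              MeasureTheory.integral_const_mul, integral_sub (hSint n) (hSint k), hS0, hS0]
            simp
        _ ≤ ∫ ω, G ω ∂ℙ := integral_mono hint' hGint hmono
    have hF1 : Real.exp (t * a) * (ℙ (A k)).toReal ≤ ∫ ω, F ω ∂ℙ := by
      have hmono : ∀ ω, (A k).indicator (fun _ => Real.exp (t * a)) ω ≤ F ω := by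
        intro ω
        by_cases hω : ω ∈ A k
        · simp only [Set.indicator_of_mem hω, hF_def]
          exact Real.exp_le_exp.2 (mul_le_mul_of_nonneg_left hω.1 ht.le)
        · simp [Set.indicator_of_notMem hω, hF_def]
      calc Real.exp (t * a) * (ℙ (A k)).toReal
          = ∫ ω, (A k).indicator (fun _ => Real.exp (t * a)) ω ∂ℙ := by
            rw [integral_indicator_const _ (hAmeas k)]
            simp [mul_comm, Measure.real]
        _ ≤ ∫ ω, F ω ∂ℙ :=
            integral_mono ((integrable_const _).indicator (hAmeas k)) hFint hmono
    have hF0 : 0 ≤ ∫ ω, F ω ∂ℙ := by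
      apply integral_nonneg
      intro ω
      exact Set.indicator_nonneg (fun ω _ => (Real.exp_pos _).le) ω
    calc Real.exp (t * a) * (ℙ (A k)).toReal ≤ ∫ ω, F ω ∂ℙ := hF1
      _ = (∫ ω, F ω ∂ℙ) * 1 := (mul_one _).symm
      _ ≤ (∫ ω, F ω ∂ℙ) * ∫ ω, G ω ∂ℙ := mul_le_mul_of_nonneg_left hG1 hF0
      _ = ∫ ω in A k, Real.exp (t * S n ω) ∂ℙ := hsetint.symm
  -- sum up
  have hexpint : Integrable (fun ω => Real.exp (t * S n ω)) ℙ := hint (hSmeas n) n (hSbd n)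
  have hsum : Real.exp (t * a) * ∑ k ∈ Finset.Icc 1 n, (ℙ (A k)).toReal
      ≤ Real.exp ((n:ℝ) * (t ^ 2 / 2)) := by
    calc Real.exp (t * a) * ∑ k ∈ Finset.Icc 1 n, (ℙ (A k)).toReal
        = ∑ k ∈ Finset.Icc 1 n, Real.exp (t * a) * (ℙ (A k)).toReal := Finset.mul_sum _ _ _
      _ ≤ ∑ k ∈ Finset.Icc 1 n, ∫ ω in A k, Real.exp (t * S n ω) ∂ℙ :=
          Finset.sum_le_sum hkey
      _ = ∫ ω in ⋃ k ∈ Finset.Icc 1 n, A k, Real.exp (t * S n ω) ∂ℙ :=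
          (integral_biUnion_finset _ (fun k _ => hAmeas k) hdisj
            (fun k _ => hexpint.integrableOn)).symm
      _ ≤ ∫ ω, Real.exp (t * S n ω) ∂ℙ :=
          setIntegral_le_integral hexpint
            (Filter.Eventually.of_forall fun ω => (Real.exp_pos _).le)
      _ = mgf (∑ l ∈ Finset.range n, Y l) ℙ t := by
          rw [mgf]
          congr 1
          funext ω
          simp only [hS_def, Finset.sum_apply]
      _ = ∏ l ∈ Finset.range n, mgf (Y l) ℙ t := hind.mgf_sum hm _
      _ ≤ ∏ l ∈ Finset.range n, Real.exp (t ^ 2 / 2) :=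
          Finset.prod_le_prod (fun l _ => mgf_nonneg)
            (fun l _ => my_mgf_le (hm l) (hb l) (h0 l) t)
      _ = Real.exp ((n:ℝ) * (t ^ 2 / 2)) := by
          rw [Finset.prod_const, Finset.card_range, Real.exp_nat_mul]
  have hfinal : ∑ k ∈ Finset.Icc 1 n, (ℙ (A k)).toReal ≤ Real.exp (-(a ^ 2) / (2 * n)) := by
    have h1 : ∑ k ∈ Finset.Icc 1 n, (ℙ (A k)).toReal
        ≤ Real.exp ((n:ℝ) * (t ^ 2 / 2)) / Real.exp (t * a) := by
      rw [le_div_iff₀ (Real.exp_pos _)]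
      calc (∑ k ∈ Finset.Icc 1 n, (ℙ (A k)).toReal) * Real.exp (t * a)
          = Real.exp (t * a) * ∑ k ∈ Finset.Icc 1 n, (ℙ (A k)).toReal := mul_comm _ _
        _ ≤ _ := hsum
    have h2 : Real.exp ((n:ℝ) * (t ^ 2 / 2)) / Real.exp (t * a)
        = Real.exp (-(a ^ 2) / (2 * n)) := by
      rw [← Real.exp_sub]
      congr 1
      rw [ht_def]
      field_simp
      ring
    rw [← h2]; exact h1
  calc ℙ {ω | ∃ k, 1 ≤ k ∧ k ≤ n ∧ a ≤ ∑ l ∈ Finset.range k, Y l ω}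
      ≤ ℙ (⋃ k ∈ Finset.Icc 1 n, A k) := measure_mono hsub
    _ ≤ ∑ k ∈ Finset.Icc 1 n, ℙ (A k) := measure_biUnion_finset_le _ _
    _ ≤ ENNReal.ofReal (Real.exp (-(a ^ 2) / (2 * n))) := by
        have hne : ∀ k ∈ Finset.Icc 1 n, ℙ (A k) ≠ ⊤ := fun k _ => measure_ne_top _ _
        rw [← ENNReal.ofReal_toReal (a := ∑ k ∈ Finset.Icc 1 n, ℙ (A k))
          (ENNReal.sum_lt_top.2 (fun k hk => (hne k hk).lt_top)).ne]
        apply ENNReal.ofReal_le_ofReal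
        rw [ENNReal.toReal_sum hne]
        exact hfinal


end Helpers

/-- the mean-deviation half of the anytime confidence guarantee.
With β_s = √((4/s)·ln(8K(log₂ s)²/δ)), the probability that some arm's running
mean ever (for some s ≥ 2) deviates from its expectation by at least β_s is at
most (δ/4)·(π²/6), which is strictly less than δ/2. -/
theorem stmt14 {Ω : Type*} [MeasureSpace Ω] [IsProbabilityMeasure (ℙ : Measure Ω)]
    (K : ℕ) (hK : 1 ≤ K) (δ : ℝ) (hδ : δ ∈ Set.Ioo (0 : ℝ) 1)
    (X : Fin K → ℕ → Ω → ℝ)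
    (hmeas : ∀ i l, Measurable (X i l))
    (hrange : ∀ i l ω, X i l ω ∈ Set.Icc (0 : ℝ) 1)
    (hindep : ∀ i, iIndepFun (fun l => X i l) ℙ)
    (hident : ∀ i l, IdentDistrib (X i l) (X i 0) ℙ ℙ)
    (μ : Fin K → ℝ)
    (hμ : ∀ i, μ i = ∫ ω, X i 0 ω ∂ℙ)
    (β : ℕ → ℝ)
    (hβ : ∀ s : ℕ, β s = Real.sqrt ((4 / s) * Real.log (8 * K * (Real.logb 2 s) ^ 2 / δ))) :
    ℙ {ω | ∃ i : Fin K, ∃ s : ℕ, 2 ≤ s ∧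
        β s ≤ |(1 / (s : ℝ)) * ∑ l ∈ Finset.range s, X i l ω - μ i|}
      ≤ ENNReal.ofReal ((δ / 4) * (Real.pi ^ 2 / 6)) ∧
    (δ / 4) * (Real.pi ^ 2 / 6) < δ / 2 := by
  obtain ⟨hδ0, hδ1⟩ := hδ
  have hK0 : (0:ℝ) < K := by exact_mod_cast Nat.lt_of_lt_of_le Nat.zero_lt_one hK
  have hK1 : (1:ℝ) ≤ K := by exact_mod_cast hK
  constructor
  swap
  · have hpi2 : Real.pi ^ 2 < 12 := by nlinarith [Real.pi_lt_d2, Real.pi_pos]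
    nlinarith [mul_lt_mul_of_pos_left hpi2 hδ0]
  -- setup
  set L : ℕ → ℝ := fun γ => Real.log (8 * K * ((γ:ℝ) - 1) ^ 2 / δ) with hL_def
  set aa : ℕ → ℝ := fun γ => Real.sqrt (2 ^ (γ + 1) * L γ) with haa_def
  have harg8 : ∀ γ : ℕ, 2 ≤ γ → (8:ℝ) ≤ 8 * K * ((γ:ℝ) - 1) ^ 2 / δ := by
    intro γ hγ
    have hγ1 : (1:ℝ) ≤ (γ:ℝ) - 1 := by
      have : (2:ℝ) ≤ (γ:ℝ) := by exact_mod_cast hγ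
      linarith
    have h2 : (1:ℝ) ≤ ((γ:ℝ) - 1) ^ 2 := by nlinarith
    rw [le_div_iff₀ hδ0]
    nlinarith [mul_le_mul hK1 h2 zero_le_one hK0.le]
  have hLpos : ∀ γ : ℕ, 2 ≤ γ → 0 < L γ := fun γ hγ =>
    Real.log_pos (lt_of_lt_of_le (by norm_num) (harg8 γ hγ))
  have haapos : ∀ γ : ℕ, 2 ≤ γ → 0 < aa γ := fun γ hγ =>
    Real.sqrt_pos.2 (mul_pos (by positivity) (hLpos γ hγ))
  have hXint : ∀ i l, Integrable (X i l) ℙ := fun i l =>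
    my_integrable_of_bdd (hmeas i l).aestronglyMeasurable 1 (fun ω =>
      abs_le.2 ⟨by linarith [(hrange i l ω).1], (hrange i l ω).2⟩)
  have hμ01 : ∀ i, 0 ≤ μ i ∧ μ i ≤ 1 := by
    intro i
    rw [hμ i]
    constructor
    · exact integral_nonneg fun ω => (hrange i 0 ω).1
    · calc ∫ ω, X i 0 ω ∂ℙ ≤ ∫ _ω, (1:ℝ) ∂ℙ :=
          integral_mono (hXint i 0) (integrable_const 1) fun ω => (hrange i 0 ω).2
        _ = 1 := by simp
  have hmean : ∀ i l, ∫ ω, X i l ω ∂ℙ = μ i := fun i l => by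
    rw [(hident i l).integral_eq, ← hμ i]
  have hYb : ∀ (i : Fin K) l ω, |X i l ω - μ i| ≤ 1 := fun i l ω =>
    abs_le.2 ⟨by linarith [(hrange i l ω).1, (hμ01 i).2],
      by linarith [(hrange i l ω).2, (hμ01 i).1]⟩
  have hYb' : ∀ (i : Fin K) l ω, |μ i - X i l ω| ≤ 1 := fun i l ω => by
    rw [abs_sub_comm]; exact hYb i l ω
  have hY0 : ∀ i l, ∫ ω, (X i l ω - μ i) ∂ℙ = 0 := by
    intro i l
    rw [integral_sub (hXint i l) (integrable_const _), hmean, integral_const]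
    simp
  have hY0' : ∀ i l, ∫ ω, (μ i - X i l ω) ∂ℙ = 0 := by
    intro i l
    rw [integral_sub (integrable_const _) (hXint i l), hmean, integral_const]
    simp
  have hindp : ∀ i, iIndepFun (fun l ω => X i l ω - μ i) ℙ :=
    fun i => (hindep i).comp (g := fun _ => fun x : ℝ => x - μ i)
      (fun _ => measurable_id.sub measurable_const)
  have hindm : ∀ i, iIndepFun (fun l ω => μ i - X i l ω) ℙ :=
    fun i => (hindep i).comp (g := fun _ => fun x : ℝ => μ i - x)
      (fun _ => measurable_const.sub measurable_id)
  set Ap : Fin K → ℕ → Set Ω := fun i m =>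
    {ω | ∃ k, 1 ≤ k ∧ k ≤ 2 ^ (m + 2) ∧ aa (m + 2) ≤ ∑ l ∈ Finset.range k, (X i l ω - μ i)}
    with hAp_def
  set Am : Fin K → ℕ → Set Ω := fun i m =>
    {ω | ∃ k, 1 ≤ k ∧ k ≤ 2 ^ (m + 2) ∧ aa (m + 2) ≤ ∑ l ∈ Finset.range k, (μ i - X i l ω)}
    with hAm_def
  -- bound on each piece
  have hexp_eq : ∀ m : ℕ, Real.exp (-(aa (m + 2) ^ 2) / (2 * ((2 ^ (m + 2) : ℕ) : ℝ)))
      = δ / (8 * K * ((m:ℝ) + 1) ^ 2) := by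
    intro m
    have hLp := hLpos (m + 2) (by omega)
    have hsq : aa (m + 2) ^ 2 = 2 ^ (m + 2 + 1) * L (m + 2) := by
      rw [haa_def]
      exact Real.sq_sqrt (mul_nonneg (by positivity) hLp.le)
    have hcast : ((2 ^ (m + 2) : ℕ) : ℝ) = 2 ^ (m + 2) := by push_cast; ring
    rw [hsq, hcast]
    have hratio : -(2 ^ (m + 2 + 1) * L (m + 2)) / (2 * 2 ^ (m + 2)) = -L (m + 2) := by
      rw [pow_succ]
      have h2 : (0:ℝ) < 2 ^ (m + 2) := by positivity
      field_simp
    rw [hratio, Real.exp_neg, hL_def, Real.exp_log (lt_of_lt_of_le (by norm_num)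
      (harg8 (m + 2) (by omega))), inv_div]
    congr 2
    push_cast
    ring
  have hApb : ∀ (i : Fin K) (m : ℕ),
      ℙ (Ap i m) ≤ ENNReal.ofReal (δ / (8 * K * ((m:ℝ) + 1) ^ 2)) := by
    intro i m
    have key := my_maximal (Y := fun l ω => X i l ω - μ i)
      (fun l => (hmeas i l).sub measurable_const) (fun l ω => hYb i l ω)
      (fun l => hY0 i l) (hindp i) (2 ^ (m + 2)) Nat.one_le_two_pow
      (haapos (m + 2) (by omega))
    rw [hexp_eq m] at key
    exact key
  have hAmb : ∀ (i : Fin K) (m : ℕ),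
      ℙ (Am i m) ≤ ENNReal.ofReal (δ / (8 * K * ((m:ℝ) + 1) ^ 2)) := by
    intro i m
    have key := my_maximal (Y := fun l ω => μ i - X i l ω)
      (fun l => measurable_const.sub (hmeas i l)) (fun l ω => hYb' i l ω)
      (fun l => hY0' i l) (hindm i) (2 ^ (m + 2)) Nat.one_le_two_pow
      (haapos (m + 2) (by omega))
    rw [hexp_eq m] at key
    exact key
  -- inclusion of the event
  have hsub : {ω | ∃ i : Fin K, ∃ s : ℕ, 2 ≤ s ∧
      β s ≤ |(1 / (s : ℝ)) * ∑ l ∈ Finset.range s, X i l ω - μ i|}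
      ⊆ ⋃ (i : Fin K), ⋃ (m : ℕ), (Ap i m ∪ Am i m) := by
    rintro ω ⟨i, s, hs2, hdev⟩
    have hsR : (0:ℝ) < s := by
      have : 0 < s := by omega
      exact_mod_cast this
    have hmean_abs : |(1 / (s:ℝ)) * ∑ l ∈ Finset.range s, X i l ω - μ i| ≤ 1 := by
      have h0s : 0 ≤ ∑ l ∈ Finset.range s, X i l ω :=
        Finset.sum_nonneg fun l _ => (hrange i l ω).1
      have h1s : ∑ l ∈ Finset.range s, X i l ω ≤ s := by
        calc ∑ l ∈ Finset.range s, X i l ω ≤ ∑ _l ∈ Finset.range s, (1:ℝ) :=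
            Finset.sum_le_sum fun l _ => (hrange i l ω).2
          _ = s := by simp
      have hfrac0 : 0 ≤ (1 / (s:ℝ)) * ∑ l ∈ Finset.range s, X i l ω := by positivity
      have hfrac1 : (1 / (s:ℝ)) * ∑ l ∈ Finset.range s, X i l ω ≤ 1 := by
        rw [one_div, inv_mul_eq_div, div_le_one hsR]
        exact h1s
      rw [abs_le]
      exact ⟨by linarith [(hμ01 i).2], by linarith [(hμ01 i).1]⟩
    have hs3 : 3 ≤ s := by
      by_contra hcon
      have hs2' : s = 2 := by omega
      subst hs2'
      have hb2 : 1 < β 2 := by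
        rw [hβ 2]
        have hlogb2 : Real.logb 2 ((2:ℕ):ℝ) = 1 := by
          norm_num
        rw [hlogb2]
        have h8 : (8:ℝ) ≤ 8 * K * 1 ^ 2 / δ := by
          rw [le_div_iff₀ hδ0]
          nlinarith
        have hexp18 : Real.exp 1 < 8 := lt_trans Real.exp_one_lt_d9 (by norm_num)
        have hlog8 : (1:ℝ) < Real.log 8 := (Real.lt_log_iff_exp_lt (by norm_num)).2 hexp18
        have hlog : 1 < Real.log (8 * (K:ℝ) * 1 ^ 2 / δ) :=
          lt_of_lt_of_le hlog8 (Real.log_le_log (by norm_num) h8)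
        have harg : (1:ℝ) < (4 / ((2:ℕ):ℝ)) * Real.log (8 * K * 1 ^ 2 / δ) := by
          push_cast
          nlinarith
        calc (1:ℝ) = Real.sqrt 1 := Real.sqrt_one.symm
          _ < _ := Real.sqrt_lt_sqrt zero_le_one harg
      have : β 2 ≤ 1 := le_trans hdev hmean_abs
      linarith
    set γ := Nat.clog 2 s with hγ_def
    have hγ2 : 2 ≤ γ := by
      by_contra hcon
      push_neg at hcon
      have : s ≤ 2 ^ 1 := (Nat.clog_le_iff_le_pow (by norm_num)).1 (by omega)
      omega
    have hsle : s ≤ 2 ^ γ := Nat.le_pow_clog (by norm_num) s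
    have hslt : 2 ^ (γ - 1) < s := Nat.pow_pred_clog_lt_self (by norm_num) (by omega)
    have hpowle : (2:ℝ) ^ (γ - 1) ≤ (s:ℝ) := by exact_mod_cast hslt.le
    have hγ1R : (1:ℝ) ≤ (γ:ℝ) - 1 := by
      have : (2:ℝ) ≤ (γ:ℝ) := by exact_mod_cast hγ2
      linarith
    have hlogb : (γ:ℝ) - 1 ≤ Real.logb 2 s := by
      rw [Real.le_logb_iff_rpow_le (by norm_num) hsR]
      have hc : ((γ - 1 : ℕ):ℝ) = (γ:ℝ) - 1 := by
        have : 1 ≤ γ := by omega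
        push_cast [this]
        ring
      rw [← hc, Real.rpow_natCast]
      exact hpowle
    have hargle : 8 * (K:ℝ) * ((γ:ℝ) - 1) ^ 2 / δ ≤ 8 * K * Real.logb 2 s ^ 2 / δ := by
      apply (div_le_div_iff_of_pos_right hδ0).2
      have hsq : ((γ:ℝ) - 1) ^ 2 ≤ Real.logb 2 s ^ 2 := by nlinarith
      nlinarith [mul_le_mul_of_nonneg_left hsq (by positivity : (0:ℝ) ≤ 8 * (K:ℝ))]
    have hLle : L γ ≤ Real.log (8 * K * Real.logb 2 s ^ 2 / δ) := by
      rw [hL_def]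
      exact Real.log_le_log (lt_of_lt_of_le (by norm_num) (harg8 γ hγ2)) hargle
    -- aa γ ≤ s * β s
    have haale : aa γ ≤ (s:ℝ) * β s := by
      have hβrw : Real.sqrt ((s:ℝ) ^ 2 *
          ((4 / (s:ℝ)) * Real.log (8 * K * Real.logb 2 s ^ 2 / δ))) = (s:ℝ) * β s := by
        rw [Real.sqrt_mul (sq_nonneg _), Real.sqrt_sq hsR.le, hβ s]
      rw [← hβrw, haa_def]
      apply Real.sqrt_le_sqrt
      have hrhs : (s:ℝ) ^ 2 * ((4 / (s:ℝ)) * Real.log (8 * K * Real.logb 2 s ^ 2 / δ))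
          = 4 * (s:ℝ) * Real.log (8 * K * Real.logb 2 s ^ 2 / δ) := by
        field_simp
      rw [hrhs]
      have hpow : (2:ℝ) ^ (γ + 1) = 4 * 2 ^ (γ - 1) := by
        have h : γ - 1 + 2 = γ + 1 := by omega
        rw [← h, pow_add]
        ring
      rw [hpow]
      have hmm := mul_le_mul hpowle hLle (hLpos γ hγ2).le hsR.le
      linarith
    have hsum_eq : ∑ l ∈ Finset.range s, (X i l ω - μ i)
        = (s:ℝ) * ((1 / (s:ℝ)) * ∑ l ∈ Finset.range s, X i l ω - μ i) := by
      rw [Finset.sum_sub_distrib, Finset.sum_const, Finset.card_range]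
      field_simp
      rw [nsmul_eq_mul]
    have hkey2 : aa γ ≤ |∑ l ∈ Finset.range s, (X i l ω - μ i)| := by
      rw [hsum_eq, abs_mul, abs_of_pos hsR]
      calc aa γ ≤ (s:ℝ) * β s := haale
        _ ≤ _ := mul_le_mul_of_nonneg_left hdev hsR.le
    have hm2 : γ - 2 + 2 = γ := by omega
    refine Set.mem_iUnion.2 ⟨i, Set.mem_iUnion.2 ⟨γ - 2, ?_⟩⟩
    rcases abs_cases (∑ l ∈ Finset.range s, (X i l ω - μ i)) with ⟨heq, _⟩ | ⟨heq, _⟩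
    · left
      rw [hAp_def]
      refine ⟨s, by omega, ?_, ?_⟩
      · rw [hm2]; exact hsle
      · rw [hm2, ← heq]; exact hkey2
    · right
      rw [hAm_def]
      refine ⟨s, by omega, ?_, ?_⟩
      · rw [hm2]; exact hsle
      · rw [hm2]
        have hneg : ∑ l ∈ Finset.range s, (μ i - X i l ω)
            = -∑ l ∈ Finset.range s, (X i l ω - μ i) := by
          rw [← Finset.sum_neg_distrib]
          exact Finset.sum_congr rfl fun l _ => by ring
        rw [hneg, ← heq]
        exact hkey2
  -- summing up
  have hApm : ∀ (i : Fin K) (m : ℕ), ℙ (Ap i m ∪ Am i m)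
      ≤ ENNReal.ofReal (δ / (4 * K * ((m:ℝ) + 1) ^ 2)) := by
    intro i m
    calc ℙ (Ap i m ∪ Am i m) ≤ ℙ (Ap i m) + ℙ (Am i m) := measure_union_le _ _
      _ ≤ ENNReal.ofReal (δ / (8 * K * ((m:ℝ) + 1) ^ 2))
          + ENNReal.ofReal (δ / (8 * K * ((m:ℝ) + 1) ^ 2)) := add_le_add (hApb i m) (hAmb i m)
      _ = ENNReal.ofReal (δ / (4 * K * ((m:ℝ) + 1) ^ 2)) := by
          rw [← ENNReal.ofReal_add (by positivity) (by positivity)]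
          congr 1
          have hmp : (0:ℝ) < ((m:ℝ) + 1) ^ 2 := by positivity
          field_simp
          ring
  have hbasel : HasSum (fun m : ℕ => δ / (4 * K * ((m:ℝ) + 1) ^ 2))
      (δ / (4 * K) * (Real.pi ^ 2 / 6)) := by
    have h0 : HasSum (fun n : ℕ => (1:ℝ) / (n:ℝ) ^ 2) (Real.pi ^ 2 / 6) := hasSum_zeta_two
    have h1 : HasSum (fun n : ℕ => (1:ℝ) / ((n:ℝ) + 1) ^ 2) (Real.pi ^ 2 / 6) := by
      have h2 := (hasSum_nat_add_iff' 1).2 h0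
      simpa using h2
    have h2 := h1.mul_left (δ / (4 * K))
    have heq : (fun m : ℕ => δ / (4 * K * ((m:ℝ) + 1) ^ 2))
        = fun m : ℕ => δ / (4 * K) * ((1:ℝ) / ((m:ℝ) + 1) ^ 2) := by
      funext m
      have hmp : (0:ℝ) < ((m:ℝ) + 1) ^ 2 := by positivity
      field_simp
    rw [heq]
    exact h2
  calc ℙ {ω | ∃ i : Fin K, ∃ s : ℕ, 2 ≤ s ∧
        β s ≤ |(1 / (s : ℝ)) * ∑ l ∈ Finset.range s, X i l ω - μ i|}
      ≤ ℙ (⋃ (i : Fin K), ⋃ (m : ℕ), (Ap i m ∪ Am i m)) := measure_mono hsub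
    _ ≤ ∑' (i : Fin K), ℙ (⋃ (m : ℕ), (Ap i m ∪ Am i m)) := measure_iUnion_le _
    _ ≤ ∑' (i : Fin K), ∑' (m : ℕ), ℙ (Ap i m ∪ Am i m) :=
        ENNReal.tsum_le_tsum (fun i => measure_iUnion_le _)
    _ ≤ ∑' (i : Fin K), ∑' (m : ℕ), ENNReal.ofReal (δ / (4 * K * ((m:ℝ) + 1) ^ 2)) :=
        ENNReal.tsum_le_tsum (fun i => ENNReal.tsum_le_tsum (fun m => hApm i m))
    _ = ∑' (_i : Fin K), ENNReal.ofReal (δ / (4 * K) * (Real.pi ^ 2 / 6)) := by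
        apply tsum_congr
        intro i
        rw [← ENNReal.ofReal_tsum_of_nonneg (fun m => by positivity) hbasel.summable,
          hbasel.tsum_eq]
    _ = (K : ℝ≥0∞) * ENNReal.ofReal (δ / (4 * K) * (Real.pi ^ 2 / 6)) := by
        rw [tsum_fintype, Finset.sum_const, Finset.card_univ, Fintype.card_fin,
          nsmul_eq_mul]
    _ = ENNReal.ofReal ((δ / 4) * (Real.pi ^ 2 / 6)) := by
        have hKne : (K:ℝ) ≠ 0 := ne_of_gt hK0
        have h1 : (K:ℝ) * (δ / (4 * K)) = δ / 4 := by
          rw [mul_comm (4:ℝ) (K:ℝ), ← mul_div_assoc, mul_div_mul_left _ _ hKne]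
        have hre : (K:ℝ) * (δ / (4 * K) * (Real.pi ^ 2 / 6)) = δ / 4 * (Real.pi ^ 2 / 6) := by
          rw [← mul_assoc, h1]
        rw [← ENNReal.ofReal_natCast K, ← ENNReal.ofReal_mul (by positivity), hre]
end
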